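/- Let V be a reflexive real normed space (the canonical inclusion of V into its double dual is surjective). Let Φ : V → ℝ be convex, lower semicontinuous with inf_{u∈V} Φ(u) > −∞, and let A₀ : V → V* satisfy A₀ = −∂Φ, i.e. Φ(v) ≥ Φ(u) − ⟨A₀(u), v − u⟩ for all u, v ∈ V. Let F : V → V* be any map. Suppose there exist constants κ₁ ∈ ℝ \ {0} and K₁ ∈ ℝ such that ‖F(u)‖_{V*} ≤ κ₁⟨A₀(u), u⟩ + K₁ for every u ∈ V, and constants κ₂, K₂ ∈ ℝ such that 2⟨F(u), u⟩ ≤ κ₂⟨A₀(u), u⟩ + K₂ for every u ∈ V, where additionally κ₂ ∈ (−2, ∞) whenever κ₁ < 0. Then there exist δ₄ > 0 and C₄ ∈ ℝ such that the operator A := A₀ + F satisfies 2⟨A(u), u⟩ ≤ C₄ − δ₄‖A(u)‖_{V*} for every u ∈ V. -/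

import Mathlib

/-!
Reflexivity makes `V` complete, so by Baire's theorem some sublevel set `{Φ ≤ n}` (closed by
lower semicontinuity) contains a ball, and convexity moves that upper bound to a ball
`‖z‖ ≤ ρ` around `0`. Testing the subgradient inequality at `u` against `v = ±z` then gives
`ρ ‖A₀ u‖ ≤ B - inf Φ - ⟨A₀ u, u⟩`, while `v = 0` gives `⟨A₀ u, u⟩ ≤ Φ 0 - inf Φ`.
Hence `2⟨A u, u⟩ + δ ‖A u‖ ≤ (2 + κ₂ - δ (ρ⁻¹ - κ₁)) ⟨A₀ u, u⟩ + const` for every `δ ≥ 0`.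
If `κ₁ < 0` we choose `δ` so that the coefficient vanishes; if `κ₁ > 0`, the bound on `‖F u‖`
forces `κ₁ ⟨A₀ u, u⟩ + K₁ ≥ 0`, so `⟨A₀ u, u⟩` ranges over a bounded interval and `δ = 1` works.
-/

open Metric Set

theorem NormedSpace.completeSpace_of_surjective_inclusionInDoubleDual
    {𝕜 E : Type*} [RCLike 𝕜] [NormedAddCommGroup E] [NormedSpace 𝕜 E]
    (h : Function.Surjective (inclusionInDoubleDual 𝕜 E)) : CompleteSpace E :=
  (LinearIsometryEquiv.ofSurjective (inclusionInDoubleDualLi 𝕜) h).toIsometryEquiv.completeSpace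

theorem LowerSemicontinuous.exists_isOpen_forall_le {X : Type*} [TopologicalSpace X]
    [BaireSpace X] [Nonempty X] {f : X → ℝ} (hf : LowerSemicontinuous f) :
    ∃ U : Set X, IsOpen U ∧ U.Nonempty ∧ ∃ b, ∀ x ∈ U, f x ≤ b := by
  have hcover : ⋃ n : ℕ, {x | f x ≤ n} = univ :=
    eq_univ_of_forall fun x => mem_iUnion.2 ⟨⌈f x⌉₊, Nat.le_ceil (f x)⟩
  obtain ⟨n, hn⟩ :=
    nonempty_interior_of_iUnion_of_closed (fun n : ℕ => hf.isClosed_preimage n) hcover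
  exact ⟨_, isOpen_interior, hn, n, fun x hx => interior_subset (s := f ⁻¹' Iic (n : ℝ)) hx⟩

section NormedSpace

variable {E : Type*} [NormedAddCommGroup E] [NormedSpace ℝ E]

theorem ConvexOn.le_on_ball_zero_of_le_on_ball {Φ : E → ℝ} (hΦ : ConvexOn ℝ univ Φ)
    {x₀ : E} {r b : ℝ} (h : ∀ y ∈ ball x₀ r, Φ y ≤ b) :
    ∀ z ∈ ball (0 : E) (r / 2), Φ z ≤ (b + Φ (-x₀)) / 2 := by
  intro z hz
  have hmem : x₀ + (2 : ℝ) • z ∈ ball x₀ r := by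
    rw [mem_ball_zero_iff] at hz
    rw [mem_ball, dist_eq_norm, add_sub_cancel_left, norm_smul, Real.norm_two]
    linarith
  have hmid : (1 / 2 : ℝ) • (x₀ + (2 : ℝ) • z) + (1 / 2 : ℝ) • (-x₀) = z := by module
  have hconv := hΦ.2 (mem_univ (x₀ + (2 : ℝ) • z)) (mem_univ (-x₀))
    (by norm_num : (0 : ℝ) ≤ 1 / 2) (by norm_num : (0 : ℝ) ≤ 1 / 2) (by norm_num)
  rw [hmid, smul_eq_mul, smul_eq_mul] at hconv
  linarith [h _ hmem]

theorem ConvexOn.exists_bddAbove_closedBall_zero [CompleteSpace E] {Φ : E → ℝ}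
    (hΦ : ConvexOn ℝ univ Φ) (hlsc : LowerSemicontinuous Φ) :
    ∃ ρ > 0, BddAbove (Φ '' closedBall 0 ρ) := by
  obtain ⟨U, hU, ⟨x₀, hx₀⟩, b, hb⟩ := hlsc.exists_isOpen_forall_le
  obtain ⟨r, hr, hball⟩ := isOpen_iff.1 hU x₀ hx₀
  refine ⟨r / 4, by positivity, (b + Φ (-x₀)) / 2, ?_⟩
  rintro _ ⟨z, hz, rfl⟩
  refine hΦ.le_on_ball_zero_of_le_on_ball (fun y hy => hb y (hball hy)) z ?_
  exact closedBall_subset_ball (by linarith) hz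

theorem norm_le_of_neg_subgradient {Φ : E → ℝ} {ℓ : StrongDual ℝ E} {u : E}
    (hsub : ∀ v, Φ v ≥ Φ u - ℓ (v - u)) {m : ℝ} (hm : m ≤ Φ u) {ρ B : ℝ} (hρ : 0 < ρ)
    (hB : ∀ z ∈ closedBall (0 : E) ρ, Φ z ≤ B) : ‖ℓ‖ ≤ ρ⁻¹ * (B - m - ℓ u) := by
  rw [← div_eq_inv_mul]
  refine ContinuousLinearMap.opNorm_bound_of_ball_bound hρ _ ℓ fun z hz => abs_le.2 ⟨?_, ?_⟩
  · have := hsub z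
    rw [map_sub] at this
    linarith [hB z hz]
  · have := hsub (-z)
    rw [map_sub, map_neg] at this
    linarith [hB (-z) (by rwa [mem_closedBall_zero_iff, norm_neg, ← mem_closedBall_zero_iff])]

end NormedSpace

theorem exists_pos_forall_mul_le {ι : Type*} (a : ι → ℝ) {L κ₁ κ₂ K₁ M : ℝ} (hL : 0 ≤ L)
    (hκ₁ : κ₁ ≠ 0) (hκ₂ : κ₁ < 0 → -2 < κ₂) (hM : ∀ i, a i ≤ M)
    (hK₁ : ∀ i, 0 ≤ κ₁ * a i + K₁) :
    ∃ δ > 0, ∃ C, ∀ i, (2 + κ₂ - δ * (L - κ₁)) * a i ≤ C := by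
  rcases hκ₁.lt_or_gt with hneg | hpos
  · have hLκ : 0 < L - κ₁ := by linarith
    refine ⟨(2 + κ₂) / (L - κ₁), div_pos (by linarith [hκ₂ hneg]) hLκ, 0, fun i => ?_⟩
    rw [div_mul_cancel₀ _ hLκ.ne', sub_self, zero_mul]
  · set γ := 2 + κ₂ - 1 * (L - κ₁)
    refine ⟨1, one_pos, max (γ * M) (γ * (-K₁ / κ₁)), fun i => ?_⟩
    have hlow : -K₁ / κ₁ ≤ a i := by
      rw [div_le_iff₀ hpos]
      linarith [hK₁ i]
    rcases le_total 0 γ with hγ | hγ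
    · exact le_max_of_le_left (mul_le_mul_of_nonneg_left (hM i) hγ)
    · exact le_max_of_le_right (mul_le_mul_of_nonpos_left hlow hγ)

theorem exists_cone_bound_of_norm_le {V : Type*} [NormedAddCommGroup V] [NormedSpace ℝ V]
    (A₀ F : V → StrongDual ℝ V) {L c M κ₁ K₁ κ₂ K₂ : ℝ} (hL : 0 ≤ L)
    (hA₀ : ∀ u, ‖A₀ u‖ ≤ L * (c - A₀ u u)) (hM : ∀ u, A₀ u u ≤ M) (hκ₁ : κ₁ ≠ 0)
    (hF1 : ∀ u, ‖F u‖ ≤ κ₁ * A₀ u u + K₁) (hF2 : ∀ u, 2 * F u u ≤ κ₂ * A₀ u u + K₂)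
    (hκ₂ : κ₁ < 0 → -2 < κ₂) :
    ∃ δ > 0, ∃ C, ∀ u, 2 * (A₀ u + F u) u ≤ C - δ * ‖A₀ u + F u‖ := by
  obtain ⟨δ, hδ, C, hC⟩ := exists_pos_forall_mul_le (fun u => A₀ u u) hL hκ₁ hκ₂ hM
    fun u => (norm_nonneg _).trans (hF1 u)
  refine ⟨δ, hδ, C + K₂ + δ * (L * c + K₁), fun u => ?_⟩
  have hnorm : δ * ‖A₀ u + F u‖ ≤ δ * (L * (c - A₀ u u)) + δ * (κ₁ * A₀ u u + K₁) := by
    rw [← mul_add]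
    exact mul_le_mul_of_nonneg_left ((norm_add_le _ _).trans (add_le_add (hA₀ u) (hF1 u))) hδ.le
  rw [add_apply]
  linarith [hC u, hF2 u]

/-- If `A₀ = -∂Φ` for a convex, lower semicontinuous, bounded-below functional `Φ` on a
reflexive real normed space `V`, and `F : V → V*` satisfies
`‖F(u)‖ ≤ κ₁⟨A₀(u),u⟩ + K₁` (with `κ₁ ≠ 0`) and `2⟨F(u),u⟩ ≤ κ₂⟨A₀(u),u⟩ + K₂`
(with `κ₂ > -2` whenever `κ₁ < 0`), then `A := A₀ + F` satisfies the cone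
condition `2⟨A(u),u⟩ ≤ C₄ - δ₄‖A(u)‖`. -/
theorem perturbed_subgradient_cone_condition_coercive_bound
    {V : Type*} [NormedAddCommGroup V] [NormedSpace ℝ V]
    (hrefl : Function.Surjective (NormedSpace.inclusionInDoubleDual ℝ V))
    (Φ : V → ℝ) (hconv : ConvexOn ℝ Set.univ Φ)
    (hlsc : LowerSemicontinuous Φ)
    (hbdd : BddBelow (Set.range Φ))
    (A₀ F : V → StrongDual ℝ V)
    (hsub : ∀ u v : V, Φ v ≥ Φ u - A₀ u (v - u))
    (κ₁ K₁ : ℝ) (hκ₁ : κ₁ ≠ 0)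
    (hF1 : ∀ u : V, ‖F u‖ ≤ κ₁ * A₀ u u + K₁)
    (κ₂ K₂ : ℝ)
    (hF2 : ∀ u : V, 2 * F u u ≤ κ₂ * A₀ u u + K₂)
    (hκ₂ : κ₁ < 0 → -2 < κ₂) :
    ∃ δ₄ : ℝ, 0 < δ₄ ∧ ∃ C₄ : ℝ, ∀ u : V,
      2 * (A₀ u + F u) u ≤ C₄ - δ₄ * ‖A₀ u + F u‖ := by
  have := NormedSpace.completeSpace_of_surjective_inclusionInDoubleDual hrefl
  obtain ⟨m, hm⟩ := hbdd
  have hmΦ : ∀ u, m ≤ Φ u := fun u => hm (mem_range_self u)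
  obtain ⟨ρ, hρ, B, hB⟩ := hconv.exists_bddAbove_closedBall_zero hlsc
  have hA₀ : ∀ u, ‖A₀ u‖ ≤ ρ⁻¹ * (B - m - A₀ u u) := fun u =>
    norm_le_of_neg_subgradient (hsub u) (hmΦ u) hρ fun z hz => hB (mem_image_of_mem Φ hz)
  have hM : ∀ u, A₀ u u ≤ Φ 0 - m := fun u => by
    have := hsub u 0
    rw [zero_sub, map_neg] at this
    linarith [hmΦ u]
  exact exists_cone_bound_of_norm_le A₀ F (inv_nonneg.2 hρ.le) hA₀ hM hκ₁ hF1 hF2 hκ₂
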